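/- Let (V, J, R) be an algebraic Kähler model of real dimension 2m with m ≥ 3. Suppose ⟨R(X,JX)Y,JX⟩ = 0 for all vectors X, Y ∈ V such that X, JX, Y, JY are orthonormal (pointwise constant holomorphic sectional curvature). Then for all vectors X, Y, Z ∈ V such that X, JX, Y, JY, Z, JZ are orthonormal, one has ⟨R(Z,X)Z,Y⟩ = 0, ⟨R(JZ,X)JZ,Y⟩ = 0, and ⟨R(Z,JX)Z,Y⟩ = 0. -/

import Mathlib

/-!
Fix the unit vector `X`. The hypothesis says that the cubic form `A ↦ ⟪R(A, JA)X, JA⟫` vanishes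
on the orthogonal complement of the complex line `span {X, JX}`, which is `J`-invariant.
Polarizing it at `(Z, Z, W)` and using the Bianchi identity and `J`-invariance of `R` gives
`a + 3b = 0` for `a = ⟪R(W, Z)X, Z⟫` and `b = ⟪R(W, JZ)X, JZ⟫`. Replacing `Z` by `JZ` exchanges
`a` and `b`, so both vanish. By the curvature symmetries, the three claimed quantities are
such an `a` for `(W, Z) = (Y, Z), (Y, JZ), (JY, JZ)`.
-/

open RealInnerProductSpace Module

/-- An algebraic curvature tensor on a real inner product space `V`. -/
structure CurvatureTensor (V : Type*) [NormedAddCommGroup V] [InnerProductSpace ℝ V] where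
  R : V → V → V → V
  lin₁ : ∀ Y Z, IsLinearMap ℝ fun X => R X Y Z
  lin₂ : ∀ X Z, IsLinearMap ℝ fun Y => R X Y Z
  lin₃ : ∀ X Y, IsLinearMap ℝ fun Z => R X Y Z
  antisymm₁ : ∀ X Y Z W, ⟪R X Y Z, W⟫ = -⟪R Y X Z, W⟫
  antisymm₂ : ∀ X Y Z W, ⟪R X Y Z, W⟫ = -⟪R X Y W, Z⟫
  pair_symm : ∀ X Y Z W, ⟪R X Y Z, W⟫ = ⟪R Z W X, Y⟫
  bianchi : ∀ X Y Z, R X Y Z + R Y Z X + R Z X Y = 0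

/-- An algebraic Kähler model: an algebraic curvature tensor together with a compatible
orthogonal complex structure `J`. -/
structure KahlerModel (V : Type*) [NormedAddCommGroup V] [InnerProductSpace ℝ V]
    extends CurvatureTensor V where
  J : V →ₗ[ℝ] V
  J_isometry : ∀ X Y, ⟪J X, J Y⟫ = ⟪X, Y⟫
  J_sq : ∀ X, J (J X) = -X
  R_J_invariant : ∀ X Y Z, R (J X) (J Y) Z = R X Y Z
  R_J_commute : ∀ X Y Z, R X Y (J Z) = J (R X Y Z)

theorem cubic_polarization {M N : Type*} [AddCommMonoid M] [AddCommGroup N] (S : AddSubmonoid M)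
    (f : M → M → M → N)
    (hf₁ : ∀ a a' b c, f (a + a') b c = f a b c + f a' b c)
    (hf₂ : ∀ a b b' c, f a (b + b') c = f a b c + f a b' c)
    (hf₃ : ∀ a b c c', f a b (c + c') = f a b c + f a b c')
    (hf : ∀ a ∈ S, f a a a = 0) {a b c : M} (ha : a ∈ S) (hb : b ∈ S) (hc : c ∈ S) :
    f a b c + f a c b + f b a c + f b c a + f c a b + f c b a = 0 := by
  have expand : f a b c + f a c b + f b a c + f b c a + f c a b + f c b a =
      f (a + b + c) (a + b + c) (a + b + c) - f (a + b) (a + b) (a + b)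
        - f (a + c) (a + c) (a + c) - f (b + c) (b + c) (b + c)
        + f a a a + f b b b + f c c c := by
    simp only [hf₁, hf₂, hf₃]
    abel
  rw [expand, hf _ (S.add_mem (S.add_mem ha hb) hc), hf _ (S.add_mem ha hb),
    hf _ (S.add_mem ha hc), hf _ (S.add_mem hb hc), hf a ha, hf b hb, hf c hc]
  simp

namespace CurvatureTensor

variable {V : Type*} [NormedAddCommGroup V] [InnerProductSpace ℝ V] (T : CurvatureTensor V)

theorem map_add₁ (a b c d : V) : T.R (a + b) c d = T.R a c d + T.R b c d :=
  (T.lin₁ c d).map_add a b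

theorem map_add₂ (a b c d : V) : T.R a (b + c) d = T.R a b d + T.R a c d :=
  (T.lin₂ a d).map_add b c

theorem map_neg₂ (a b c : V) : T.R a (-b) c = -T.R a b c :=
  (T.lin₂ a c).map_neg b

theorem map_smul₁ (r : ℝ) (a b c : V) : T.R (r • a) b c = r • T.R a b c :=
  (T.lin₁ b c).map_smul r a

theorem map_smul₂ (r : ℝ) (a b c : V) : T.R a (r • b) c = r • T.R a b c :=
  (T.lin₂ a c).map_smul r b

theorem R_swap (a b c : V) : T.R b a c = -T.R a b c :=
  ext_inner_right ℝ fun d => by rw [T.antisymm₁, inner_neg_left]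

theorem inner_R_rotate (x y z : V) : ⟪T.R z x z, y⟫ = ⟪T.R y z x, z⟫ := by
  rw [T.pair_symm, T.antisymm₁, T.antisymm₂, neg_neg]

end CurvatureTensor

namespace KahlerModel

variable {V : Type*} [NormedAddCommGroup V] [InnerProductSpace ℝ V] (T : KahlerModel V)

theorem inner_J_left (a b : V) : ⟪T.J a, b⟫ = -⟪a, T.J b⟫ := by
  have h := T.J_isometry a (T.J b)
  rw [T.J_sq, inner_neg_right] at h
  linarith

theorem inner_self_J (a : V) : ⟪a, T.J a⟫ = 0 := by
  have h := T.inner_J_left a a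
  rw [real_inner_comm] at h
  linarith

theorem norm_J (a : V) : ‖T.J a‖ = ‖a‖ := by
  rw [norm_eq_sqrt_real_inner, T.J_isometry, ← norm_eq_sqrt_real_inner]

theorem R_J_right (a b c : V) : T.R a (T.J b) c = T.R b (T.J a) c := by
  rw [← T.R_J_invariant b, T.J_sq, T.map_neg₂, T.R_swap]

theorem inner_R_J_right (a b c d : V) : ⟪T.R a b c, T.J d⟫ = -⟪T.R a b (T.J c), d⟫ := by
  rw [T.R_J_commute, T.inner_J_left, neg_neg]

theorem inner_R_J_self (w x z : V) :
    ⟪T.R z (T.J z) x, T.J w⟫ = ⟪T.R w z x, z⟫ + ⟪T.R w (T.J z) x, T.J z⟫ := by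
  have hb := congrArg (⟪·, T.J w⟫) (T.bianchi z (T.J z) x)
  simp only [inner_add_left, inner_zero_left] at hb
  have h₁ : ⟪T.R (T.J z) x z, T.J w⟫ = -⟪T.R w (T.J z) x, T.J z⟫ := by
    rw [T.inner_R_J_right, T.pair_symm, T.antisymm₁, T.antisymm₂, neg_neg]
  have h₂ : ⟪T.R x z (T.J z), T.J w⟫ = -⟪T.R w z x, z⟫ := by
    rw [T.R_J_commute, T.J_isometry, T.pair_symm, T.antisymm₁]
  linarith

def complexLine (x : V) : Submodule ℝ V := ℝ ∙ x ⊔ ℝ ∙ T.J x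

theorem mem_complexLine_orthogonal {x a : V} :
    a ∈ (T.complexLine x)ᗮ ↔ ⟪x, a⟫ = 0 ∧ ⟪T.J x, a⟫ = 0 := by
  rw [complexLine, ← Submodule.inf_orthogonal, Submodule.mem_inf,
    Submodule.mem_orthogonal_singleton_iff_inner_right,
    Submodule.mem_orthogonal_singleton_iff_inner_right]

theorem J_mem_complexLine_orthogonal {x a : V} (ha : a ∈ (T.complexLine x)ᗮ) :
    T.J a ∈ (T.complexLine x)ᗮ := by
  rw [mem_complexLine_orthogonal] at ha ⊢
  rw [T.J_isometry, real_inner_comm, T.inner_J_left, real_inner_comm, ha.1, ha.2, neg_zero]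
  exact ⟨rfl, rfl⟩

theorem orthonormal_J_pair {a b : V} (ha : ‖a‖ = 1) (hb : ‖b‖ = 1)
    (hab : ⟪a, b⟫ = 0) (haJb : ⟪a, T.J b⟫ = 0) :
    Orthonormal ℝ ![a, T.J a, b, T.J b] := by
  have hbJa : ⟪b, T.J a⟫ = 0 := by rw [real_inner_comm, T.inner_J_left, haJb, neg_zero]
  rw [orthonormal_iff_ite]
  intro i j
  fin_cases i <;> fin_cases j <;>
    simp [T.norm_J, ha, hb, T.inner_self_J, T.J_isometry, T.inner_J_left, hab, haJb, hbJa,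
      real_inner_comm a]

def IsPointwiseConstHolomorphic : Prop :=
  ∀ x y : V, Orthonormal ℝ ![x, T.J x, y, T.J y] → ⟪T.R x (T.J x) y, T.J x⟫ = 0

namespace IsPointwiseConstHolomorphic

variable {T}

theorem inner_R_J_self_eq_zero (hT : T.IsPointwiseConstHolomorphic) {x a : V} (hx : ‖x‖ = 1)
    (ha : a ∈ (T.complexLine x)ᗮ) : ⟪T.R a (T.J a) x, T.J a⟫ = 0 := by
  rcases eq_or_ne a 0 with rfl | ha0
  · rw [(T.lin₁ _ _).map_zero, inner_zero_left]
  obtain ⟨hxa, hJxa⟩ := T.mem_complexLine_orthogonal.mp ha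
  have hunit := hT (‖a‖⁻¹ • a) x <| T.orthonormal_J_pair (norm_smul_inv_norm (𝕜 := ℝ) ha0) hx
    (by rw [real_inner_smul_left, real_inner_comm, hxa, mul_zero])
    (by rw [real_inner_smul_left, real_inner_comm, hJxa, mul_zero])
  simp only [map_smul, T.map_smul₁, T.map_smul₂, real_inner_smul_left, real_inner_smul_right]
    at hunit
  simpa [ha0] using hunit

theorem inner_R_add_three_mul_inner_R_J (hT : T.IsPointwiseConstHolomorphic) {x w z : V}
    (hx : ‖x‖ = 1) (hw : w ∈ (T.complexLine x)ᗮ) (hz : z ∈ (T.complexLine x)ᗮ) :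
    ⟪T.R w z x, z⟫ + 3 * ⟪T.R w (T.J z) x, T.J z⟫ = 0 := by
  -- polarize the vanishing cubic `a ↦ ⟪R a (J a) x, J a⟫` at `(z, z, w)`
  have hpol := cubic_polarization (T.complexLine x)ᗮ.toAddSubmonoid
    (fun a b c => ⟪T.R a (T.J b) x, T.J c⟫)
    (fun a a' b c => by simp only [T.map_add₁, inner_add_left])
    (fun a b b' c => by simp only [map_add, T.map_add₂, inner_add_left])
    (fun a b c c' => by simp only [map_add, inner_add_right])
    (fun a ha => hT.inner_R_J_self_eq_zero hx ha) hz hz hw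
  rw [T.R_J_right z w, T.inner_R_J_self w x z] at hpol
  linarith

theorem inner_R_eq_zero (hT : T.IsPointwiseConstHolomorphic) {x w z : V}
    (hx : ‖x‖ = 1) (hw : w ∈ (T.complexLine x)ᗮ) (hz : z ∈ (T.complexLine x)ᗮ) :
    ⟪T.R w z x, z⟫ = 0 := by
  have h₁ := hT.inner_R_add_three_mul_inner_R_J hx hw hz
  have h₂ := hT.inner_R_add_three_mul_inner_R_J hx hw (T.J_mem_complexLine_orthogonal hz)
  rw [T.J_sq, T.map_neg₂, inner_neg_left, inner_neg_right, neg_neg] at h₂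
  linarith

end IsPointwiseConstHolomorphic

end KahlerModel

theorem vanishing_mixed_terms_of_constant_holomorphic_general {V : Type*} [NormedAddCommGroup V] [InnerProductSpace ℝ V]
    (T : KahlerModel V)
    (hconst : ∀ X Y : V, Orthonormal ℝ ![X, T.J X, Y, T.J Y] →
      ⟪T.R X (T.J X) Y, T.J X⟫ = 0)
    (X Y Z : V) (h : Orthonormal ℝ ![X, T.J X, Y, T.J Y, Z, T.J Z]) :
    ⟪T.R Z X Z, Y⟫ = 0 ∧ ⟪T.R (T.J Z) X (T.J Z), Y⟫ = 0 ∧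
    ⟪T.R Z (T.J X) Z, Y⟫ = 0 := by
  have hT : T.IsPointwiseConstHolomorphic := hconst
  have hX : ‖X‖ = 1 := h.1 0
  have hY : Y ∈ (T.complexLine X)ᗮ := T.mem_complexLine_orthogonal.mpr
    ⟨h.2 (show (0 : Fin 6) ≠ 2 by decide), h.2 (show (1 : Fin 6) ≠ 2 by decide)⟩
  have hZ : Z ∈ (T.complexLine X)ᗮ := T.mem_complexLine_orthogonal.mpr
    ⟨h.2 (show (0 : Fin 6) ≠ 4 by decide), h.2 (show (1 : Fin 6) ≠ 4 by decide)⟩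
  have hJZ := T.J_mem_complexLine_orthogonal hZ
  refine ⟨?_, ?_, ?_⟩
  · rw [T.inner_R_rotate]
    exact hT.inner_R_eq_zero hX hY hZ
  · rw [T.inner_R_rotate]
    exact hT.inner_R_eq_zero hX hY hJZ
  · have hJ := T.inner_R_J_right (T.J Y) (T.J Z) X Z
    rw [hT.inner_R_eq_zero hX (T.J_mem_complexLine_orthogonal hY) hJZ, T.R_J_invariant] at hJ
    rw [T.inner_R_rotate]
    linarith

theorem vanishing_mixed_terms_of_constant_holomorphic {V : Type*} [NormedAddCommGroup V] [InnerProductSpace ℝ V] [FiniteDimensional ℝ V]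
    (T : KahlerModel V) (m : ℕ) (hm : 3 ≤ m) (hdim : finrank ℝ V = 2 * m)
    (hconst : ∀ X Y : V, Orthonormal ℝ ![X, T.J X, Y, T.J Y] →
      ⟪T.R X (T.J X) Y, T.J X⟫ = 0)
    (X Y Z : V) (h : Orthonormal ℝ ![X, T.J X, Y, T.J Y, Z, T.J Z]) :
    ⟪T.R Z X Z, Y⟫ = 0 ∧ ⟪T.R (T.J Z) X (T.J Z), Y⟫ = 0 ∧
    ⟪T.R Z (T.J X) Z, Y⟫ = 0 :=
  vanishing_mixed_terms_of_constant_holomorphic_general T hconst X Y Z h
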